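/- arXiv:1504.01776 — 8 statements merged into one kernel-verified Lean document; each statement's English description precedes it below -/
import Mathlib

section
/- Let n ≥ 2 and let a₁, …, aₙ be real numbers. Let M be the n×n symmetric tridiagonal matrix with diagonal entries a₁, …, aₙ, with all entries on the first super- and sub-diagonal equal to 1, and zeros elsewhere. If det M = 1 or det M = -1, then there exists an index i with |aᵢ| < 2. -/
/-!
Expanding along the last row, the determinants `D m` of the leading `m × m` blocks satisfy
`D (m + 2) = b (m + 1) * D (m + 1) - D m`, with `D 0 = 1` and `D 1 = b 0`. If every `|b i| ≥ 2`,
the reverse triangle inequality turns this into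
`|D (m + 2)| ≥ 2 |D (m + 1)| - |D m| ≥ |D (m + 1)| + 1`,
so `|D n| ≥ n + 1 > 1`.
-/

section Determinant

variable {R : Type*} [CommRing R]

def tridiagonalOnes (b : ℕ → R) (m : ℕ) : Matrix (Fin m) (Fin m) R :=
  Matrix.of fun i j =>
    if (i : ℕ) = j then b i else if (i : ℕ) + 1 = j ∨ (j : ℕ) + 1 = i then 1 else 0

theorem Matrix.det_succ_of_column_last_eq_zero {m : ℕ} (A : Matrix (Fin (m + 1)) (Fin (m + 1)) R)
    (hA : ∀ i ≠ Fin.last m, A i (Fin.last m) = 0) :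
    A.det = A (Fin.last m) (Fin.last m) * (A.submatrix Fin.castSucc Fin.castSucc).det := by
  rw [Matrix.det_succ_column A (Fin.last m), Finset.sum_eq_single (Fin.last m)]
  · simp [Fin.succAbove_last, ← two_mul, pow_mul]
  · intro i _ hi; simp [hA i hi]
  · simp

theorem tridiagonalOnes_submatrix_castSucc (b : ℕ → R) (m : ℕ) :
    (tridiagonalOnes b (m + 1)).submatrix Fin.castSucc Fin.castSucc = tridiagonalOnes b m := by
  ext i j
  simp [tridiagonalOnes]

theorem det_tridiagonalOnes_add_two (b : ℕ → R) (m : ℕ) :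
    (tridiagonalOnes b (m + 2)).det =
      b (m + 1) * (tridiagonalOnes b (m + 1)).det - (tridiagonalOnes b m).det := by
  set A := tridiagonalOnes b (m + 2)
  have hA : ∀ i j : Fin (m + 2), A i j =
      if (i : ℕ) = j then b i else if (i : ℕ) + 1 = j ∨ (j : ℕ) + 1 = i then 1 else 0 :=
    fun _ _ ↦ rfl
  -- Deleting column `m` leaves a minor whose last column is the unit vector at its last row.
  have hminor : (A.submatrix Fin.castSucc (Fin.last m).castSucc.succAbove).det =
      (tridiagonalOnes b m).det := by
    have hlast : (Fin.last m).castSucc.succAbove (Fin.last m) = Fin.last (m + 1) := by simp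
    have hcol : (Fin.last m).castSucc.succAbove ∘ Fin.castSucc =
        Fin.castSucc ∘ (Fin.castSucc : Fin m → Fin (m + 1)) := by
      ext j
      simp [Fin.succAbove_of_castSucc_lt, Fin.castSucc_lt_last]
    rw [Matrix.det_succ_of_column_last_eq_zero, Matrix.submatrix_submatrix, hcol,
      ← Matrix.submatrix_submatrix, tridiagonalOnes_submatrix_castSucc,
      tridiagonalOnes_submatrix_castSucc, Matrix.submatrix_apply, hlast, hA]
    · simp
    · intro i hi
      have : (i : ℕ) ≠ m := fun h ↦ hi (Fin.ext h)
      rw [Matrix.submatrix_apply, hlast, hA, if_neg (by simp; omega), if_neg (by simp; omega)]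
  rw [Matrix.det_succ_row A (Fin.last (m + 1)), Fin.sum_univ_castSucc, Fin.sum_univ_castSucc,
    Finset.sum_eq_zero, Fin.succAbove_last, hminor, tridiagonalOnes_submatrix_castSucc]
  · simp [hA, sub_eq_neg_add]
  · intro i _
    have := i.isLt
    rw [hA, if_neg (by simp; omega), if_neg (by simp; omega), mul_zero, zero_mul]

end Determinant

section Growth

variable {R : Type*} [CommRing R] [LinearOrder R] [IsStrictOrderedRing R]

theorem abs_det_tridiagonalOnes_add_one_le (b : ℕ → R) {m : ℕ} (hb : ∀ i ≤ m, 2 ≤ |b i|) :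
    |(tridiagonalOnes b m).det| + 1 ≤ |(tridiagonalOnes b (m + 1)).det| := by
  induction m with
  | zero => simpa [tridiagonalOnes, one_add_one_eq_two] using hb 0 le_rfl
  | succ k ih =>
    have ih := ih fun i hi ↦ hb i (by omega)
    calc |(tridiagonalOnes b (k + 1)).det| + 1
        ≤ 2 * |(tridiagonalOnes b (k + 1)).det| - |(tridiagonalOnes b k).det| := by linarith
      _ ≤ |b (k + 1)| * |(tridiagonalOnes b (k + 1)).det| - |(tridiagonalOnes b k).det| := by
          gcongr; exact hb _ le_rfl
      _ = |b (k + 1) * (tridiagonalOnes b (k + 1)).det| - |(tridiagonalOnes b k).det| := by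
          rw [abs_mul]
      _ ≤ |b (k + 1) * (tridiagonalOnes b (k + 1)).det - (tridiagonalOnes b k).det| :=
          abs_sub_abs_le_abs_sub _ _
      _ = |(tridiagonalOnes b (k + 2)).det| := by rw [det_tridiagonalOnes_add_two]

theorem natCast_add_one_le_abs_det_tridiagonalOnes (b : ℕ → R) {m : ℕ}
    (hb : ∀ i < m, 2 ≤ |b i|) : (m : R) + 1 ≤ |(tridiagonalOnes b m).det| := by
  induction m with
  | zero => simp [tridiagonalOnes]
  | succ k ih =>
    have hstep := abs_det_tridiagonalOnes_add_one_le (m := k) b fun i hi ↦ hb i (by omega)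
    have ih := ih fun i hi ↦ hb i (by omega)
    push_cast
    linarith

end Growth

/-- a tridiagonal real matrix with 1's on the off-diagonals and
determinant ±1 has some diagonal entry of absolute value < 2. -/
theorem tridiagonal_det_pm_one_exists_small_diag
    (n : ℕ) (hn : 2 ≤ n) (a : Fin n → ℝ)
    (M : Matrix (Fin n) (Fin n) ℝ)
    (hM : ∀ i j : Fin n, M i j =
      if i = j then a i
      else if i.val + 1 = j.val ∨ j.val + 1 = i.val then 1 else 0)
    (hdet : M.det = 1 ∨ M.det = -1) :
    ∃ i : Fin n, |a i| < 2 := by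
  by_contra! h
  set b : ℕ → ℝ := fun i ↦ if hi : i < n then a ⟨i, hi⟩ else 0
  have hMb : M = tridiagonalOnes b n := by
    ext i j
    simp [hM, tridiagonalOnes, b, Fin.ext_iff]
  have hgrow : (n : ℝ) + 1 ≤ |M.det| :=
    hMb ▸ natCast_add_one_le_abs_det_tridiagonalOnes b fun i hi ↦ by simpa [b, hi] using h ⟨i, hi⟩
  have hunit : |M.det| = 1 := by rcases hdet with hd | hd <;> simp [hd]
  have hn' : (2 : ℝ) ≤ n := by exact_mod_cast hn
  linarith
end

section
/- Let a₁, …, aₙ₊₁ be integers and let d_m = det(trig(a₁,…,a_m)) for 0 ≤ m ≤ n+1 (with d₀ = 1). If d_{n+1} = 0, then d_n = 1 or d_n = -1. -/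
/-!
Expanding along the last row gives the continuant recurrence `d (m + 2) = a (m + 2) * d (m + 1) - d m`,
so every ideal `(d m, d (m + 1))` equals `(d 0, d 1) = (1)`. If `d (n + 1) = 0`, then `d n` is a unit.
-/

open Matrix

variable {R : Type*} [CommRing R]

def trig (a : ℕ → R) (m : ℕ) : Matrix (Fin m) (Fin m) R :=
  Matrix.of fun i j => if i = j then a (i.val + 1)
    else if i.val + 1 = j.val ∨ j.val + 1 = i.val then 1 else 0

theorem det_succ_of_last_column_castSucc_eq_zero {m : ℕ} (M : Matrix (Fin (m + 1)) (Fin (m + 1)) R)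
    (h : ∀ i : Fin m, M i.castSucc (Fin.last m) = 0) :
    M.det = M (Fin.last m) (Fin.last m) * (M.submatrix Fin.castSucc Fin.castSucc).det := by
  rw [det_succ_column M (Fin.last m), Fin.sum_univ_castSucc,
    Finset.sum_eq_zero fun i _ => by rw [h i, mul_zero, zero_mul], zero_add]
  simp [Fin.succAbove_last, ← two_mul]

namespace trig

variable (a : ℕ → R) {m : ℕ}

theorem apply_self (i : Fin m) : trig a m i i = a (i.val + 1) := if_pos rfl

theorem apply_of_val_add_one_eq {i j : Fin m} (h : i.val + 1 = j.val) : trig a m i j = 1 := by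
  simp [trig, h, Fin.ext_iff]; omega

theorem apply_of_val_eq_add_one {i j : Fin m} (h : i.val = j.val + 1) : trig a m i j = 1 := by
  simp [trig, h, Fin.ext_iff]

theorem apply_of_add_one_lt {i j : Fin m} (h : i.val + 1 < j.val ∨ j.val + 1 < i.val) :
    trig a m i j = 0 := by
  simp only [trig, of_apply, Fin.ext_iff]
  rw [if_neg (by omega), if_neg (by omega)]

end trig

theorem trig_submatrix_castSucc (a : ℕ → R) (m : ℕ) :
    (trig a (m + 1)).submatrix Fin.castSucc Fin.castSucc = trig a m := by
  ext i j
  simp [trig, Fin.castSucc_inj]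

theorem det_trig_submatrix_last_succAbove (a : ℕ → R) (m : ℕ) :
    ((trig a (m + 2)).submatrix (Fin.last (m + 1)).succAbove
      (Fin.last m).castSucc.succAbove).det = (trig a m).det := by
  have hcol : (Fin.last m).castSucc.succAbove (Fin.last m) = Fin.last (m + 1) :=
    Fin.succAbove_castSucc_self _
  have hminor : (Fin.last m).castSucc.succAbove ∘ Fin.castSucc = Fin.castSucc ∘ Fin.castSucc := by
    ext k; simp [Fin.succAbove_of_castSucc_lt, Fin.lt_def]
  rw [det_succ_of_last_column_castSucc_eq_zero _ fun i => ?_]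
  · simp only [submatrix_apply, submatrix_submatrix, Fin.succAbove_last, hcol, hminor]
    rw [trig.apply_of_val_add_one_eq a (by simp), one_mul, ← submatrix_submatrix,
      trig_submatrix_castSucc, trig_submatrix_castSucc]
  · simp only [submatrix_apply, Fin.succAbove_last, hcol]
    exact trig.apply_of_add_one_lt a (.inl (by simp))

theorem det_trig_succ_succ (a : ℕ → R) (m : ℕ) :
    (trig a (m + 2)).det = a (m + 2) * (trig a (m + 1)).det - (trig a m).det := by
  rw [det_succ_row _ (Fin.last (m + 1)), Fin.sum_univ_castSucc, Fin.sum_univ_castSucc,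
    Finset.sum_eq_zero fun j _ => by
      rw [trig.apply_of_add_one_lt a (.inr (by simp)), mul_zero, zero_mul],
    zero_add, trig.apply_of_val_eq_add_one a (by simp), trig.apply_self,
    det_trig_submatrix_last_succAbove, Fin.succAbove_last, trig_submatrix_castSucc]
  have hsign : (-1 : R) ^ (m + 1 + m) = -1 := by
    rw [show m + 1 + m = 2 * m + 1 by omega, pow_succ, pow_mul]; simp
  simp only [Fin.val_last, Fin.val_castSucc, hsign, ← two_mul, Even.neg_one_pow (even_two_mul _)]
  ring

theorem det_trig_zero (a : ℕ → R) : (trig a 0).det = 1 := det_isEmpty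

theorem isCoprime_det_trig_succ (a : ℕ → R) (m : ℕ) :
    IsCoprime (trig a m).det (trig a (m + 1)).det := by
  induction m with
  | zero => simpa [det_trig_zero] using isCoprime_one_left
  | succ m ih =>
    rw [det_trig_succ_succ, sub_eq_neg_add, mul_comm]
    exact ih.symm.neg_right.add_mul_left_right _

/-- if d_m = det(trig(a₁,…,a_m)) over ℤ with d₀ = 1 and
d_{n+1} = 0, then d_n = ±1. -/
theorem tridiagonal_det_penultimate_unit
    (n : ℕ) (a : ℕ → ℤ) (d : ℕ → ℤ)
    (hd0 : d 0 = 1)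
    (hd : ∀ m : ℕ, 1 ≤ m → m ≤ n + 1 →
      d m = Matrix.det (Matrix.of fun i j : Fin m =>
        if i = j then a (i.val + 1)
        else if i.val + 1 = j.val ∨ j.val + 1 = i.val then 1 else 0))
    (hzero : d (n + 1) = 0) :
    d n = 1 ∨ d n = -1 := by
  have hd_det : ∀ m ≤ n + 1, d m = (trig a m).det := by
    rintro (_ | m) hm
    · rw [hd0, det_trig_zero]
    · exact hd _ m.succ_pos hm
  have hunit : IsUnit (d n) := by
    have := isCoprime_det_trig_succ a n
    rwa [← hd_det n n.le_succ, ← hd_det (n + 1) le_rfl, hzero, isCoprime_zero_right] at this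
  exact Int.isUnit_iff.mp hunit
end

section
/- Let c, q₁, q₂ be positive integers with q₁ ≤ q₂, and suppose c·q₁·q₂ - q₁ - q₂ = 1. Then (c·q₁, c·q₂) — i.e. the pair (p₁, p₂) with p₁ = c·q₁ and p₂ = c·q₂ and gcd(p₁,p₂) = c — is one of the pairs (2,3), (2,4), or (3,3). Equivalently: the only solutions (c,q₁,q₂) with c,q₁,q₂ ≥ 1, q₁ ≤ q₂, gcd(q₁,q₂)=1 and c·q₁·q₂ - q₁ - q₂ = 1 are (c,q₁,q₂) = (1,2,3), (2,1,2), and (3,1,1). -/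
/-!
Write `m = c q₁`. The equation `m q₂ = q₁ + q₂ + 1` forces `m ≥ 2`, hence `2 q₂ ≤ q₁ + q₂ + 1`,
so `q₂ ∈ {q₁, q₁ + 1}`. If `q₂ = q₁` then `q₁ ∣ 1`, giving `(c, q₁) = (3, 1)`; if `q₂ = q₁ + 1`
the equation becomes `c q₁ (q₁ + 1) = 2 (q₁ + 1)`, so `c q₁ = 2`.
-/

namespace Dolgachev

variable {c q₁ q₂ : ℕ}

lemma two_le_mul_of_mul_mul_eq (heq : c * q₁ * q₂ = q₁ + q₂ + 1) : 2 ≤ c * q₁ := by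
  by_contra! h
  interval_cases c * q₁ <;> omega

lemma le_succ_of_mul_mul_eq (heq : c * q₁ * q₂ = q₁ + q₂ + 1) : q₂ ≤ q₁ + 1 := by
  have : 2 * q₂ ≤ c * q₁ * q₂ := Nat.mul_le_mul_right _ (two_le_mul_of_mul_mul_eq heq)
  omega

lemma eq_three_and_eq_one_of_mul_mul_self_eq {q : ℕ} (heq : c * q * q = q + q + 1) :
    c = 3 ∧ q = 1 := by
  have hq : q = 1 := by
    have hdvd : q ∣ q + q + 1 := heq ▸ Dvd.intro_left _ rfl
    exact Nat.dvd_one.mp ((Nat.dvd_add_right (dvd_add dvd_rfl dvd_rfl)).mp hdvd)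
  subst hq
  omega

lemma mul_eq_two_of_mul_mul_succ_eq {q : ℕ} (heq : c * q * (q + 1) = q + (q + 1) + 1) :
    c * q = 2 :=
  Nat.eq_of_mul_eq_mul_right q.add_one_pos (by rw [heq]; ring)

lemma eq_one_and_eq_two_or_of_mul_eq_two {a b : ℕ} (h : a * b = 2) :
    a = 1 ∧ b = 2 ∨ a = 2 ∧ b = 1 := by
  rcases (Nat.dvd_prime Nat.prime_two).mp (Dvd.intro b h) with rfl | rfl <;> omega

end Dolgachev

open Dolgachev in
theorem dolgachev_arithmetic_classification_general
    (c q₁ q₂ : ℕ) (hle : q₁ ≤ q₂)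
    (heq : c * q₁ * q₂ = q₁ + q₂ + 1) :
    ((c * q₁, c * q₂) = (2, 3) ∨ (c * q₁, c * q₂) = (2, 4) ∨
      (c * q₁, c * q₂) = (3, 3)) ∧
    ((c, q₁, q₂) = (1, 2, 3) ∨ (c, q₁, q₂) = (2, 1, 2) ∨
      (c, q₁, q₂) = (3, 1, 1)) := by
  obtain rfl | rfl : q₂ = q₁ ∨ q₂ = q₁ + 1 := by
    have := le_succ_of_mul_mul_eq heq
    omega
  · obtain ⟨rfl, rfl⟩ := eq_three_and_eq_one_of_mul_mul_self_eq heq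
    decide
  · rcases eq_one_and_eq_two_or_of_mul_eq_two (mul_eq_two_of_mul_mul_succ_eq heq) with
      ⟨rfl, rfl⟩ | ⟨rfl, rfl⟩ <;> decide

/-- the only solutions (c,q₁,q₂) with c,q₁,q₂ ≥ 1, q₁ ≤ q₂,
gcd(q₁,q₂) = 1 and c·q₁·q₂ - q₁ - q₂ = 1 are (1,2,3), (2,1,2) and (3,1,1);
equivalently the pair (cq₁, cq₂) is (2,3), (2,4) or (3,3). -/
theorem dolgachev_arithmetic_classification
    (c q₁ q₂ : ℕ) (hc : 1 ≤ c) (h1 : 1 ≤ q₁) (hle : q₁ ≤ q₂)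
    (hgcd : Nat.gcd q₁ q₂ = 1)
    (heq : c * q₁ * q₂ = q₁ + q₂ + 1) :
    ((c * q₁, c * q₂) = (2, 3) ∨ (c * q₁, c * q₂) = (2, 4) ∨
      (c * q₁, c * q₂) = (3, 3)) ∧
    ((c, q₁, q₂) = (1, 2, 3) ∨ (c, q₁, q₂) = (2, 1, 2) ∨
      (c, q₁, q₂) = (3, 1, 1)) :=
  dolgachev_arithmetic_classification_general c q₁ q₂ hle heq
end

section
/- The only quadruple of odd positive integers (x₁, x₂, x₃, x₄) with x₄ ≤ x₃ ≤ x₂ ≤ x₁, x₂ + x₃ + x₄ ≤ x₁, gcd(x₁,x₂,x₃,x₄) = 1, and x₁² = x₂² + x₃² + 7·x₄² is (x₁, x₂, x₃, x₄) = (3, 1, 1, 1). -/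
/-!
Squaring `x₂ + x₃ + x₄ ≤ x₁` and substituting the equation gives
`x₂x₃ + x₂x₄ + x₃x₄ ≤ 3x₄²`, while each of the three products is at least `x₄²`.
Hence `x₂ = x₃ = x₄`, so `x₁ = 3x₄`, and `x₄` divides all four entries,
forcing `x₄ = 1`.
-/

theorem eq_and_eq_of_add_sq_le {R : Type*} [CommRing R] [LinearOrder R] [IsStrictOrderedRing R]
    {a b c : R} (hc : 0 < c) (hcb : c ≤ b) (hba : b ≤ a)
    (h : (a + b + c) ^ 2 ≤ a ^ 2 + b ^ 2 + 7 * c ^ 2) : a = c ∧ b = c := by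
  have hca : c ≤ a := hcb.trans hba
  have hbc : c * c ≤ b * c := mul_le_mul_of_nonneg_right hcb hc.le
  have hac : c * c ≤ a * c := mul_le_mul_of_nonneg_right hca hc.le
  have hab : c * c ≤ a * b := mul_le_mul hca hcb hc.le (hc.le.trans hca)
  have hprod : 2 * (a * b + a * c + b * c) ≤ 2 * (3 * (c * c)) := by linear_combination h
  exact ⟨mul_right_cancel₀ hc.ne' (by linarith), mul_right_cancel₀ hc.ne' (by linarith)⟩

theorem diophantine_3111_general
    (x₁ x₂ x₃ x₄ : ℤ)
    (hp1 : 0 < x₁) (hp4 : 0 < x₄)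
    (h43 : x₄ ≤ x₃) (h32 : x₃ ≤ x₂)
    (hsum : x₂ + x₃ + x₄ ≤ x₁)
    (hgcd : ∀ d : ℤ, d ∣ x₁ → d ∣ x₂ → d ∣ x₃ → d ∣ x₄ → IsUnit d)
    (heq : x₁ ^ 2 = x₂ ^ 2 + x₃ ^ 2 + 7 * x₄ ^ 2) :
    x₁ = 3 ∧ x₂ = 1 ∧ x₃ = 1 ∧ x₄ = 1 := by
  have hsq : (x₂ + x₃ + x₄) ^ 2 ≤ x₂ ^ 2 + x₃ ^ 2 + 7 * x₄ ^ 2 :=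
    heq ▸ pow_le_pow_left₀ (by linarith) hsum 2
  obtain ⟨h24, h34⟩ := eq_and_eq_of_add_sq_le hp4 h43 h32 hsq
  subst x₂ x₃
  have h14 : x₁ = 3 * x₄ :=
    (pow_left_inj₀ hp1.le (by positivity) two_ne_zero).1 (by rw [heq]; ring)
  have h4 : x₄ = 1 :=
    Int.eq_one_of_dvd_one hp4.le <| isUnit_iff_dvd_one.1 <|
      hgcd x₄ (h14 ▸ dvd_mul_left x₄ 3) dvd_rfl dvd_rfl dvd_rfl
  subst h4
  exact ⟨h14, rfl, rfl, rfl⟩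

/-- the only quadruple of odd positive integers with
x₄ ≤ x₃ ≤ x₂ ≤ x₁, x₂ + x₃ + x₄ ≤ x₁, gcd = 1 and x₁² = x₂² + x₃² + 7x₄²
is (3,1,1,1). -/
theorem diophantine_3111
    (x₁ x₂ x₃ x₄ : ℤ)
    (hp1 : 0 < x₁) (hp2 : 0 < x₂) (hp3 : 0 < x₃) (hp4 : 0 < x₄)
    (ho1 : Odd x₁) (ho2 : Odd x₂) (ho3 : Odd x₃) (ho4 : Odd x₄)
    (h43 : x₄ ≤ x₃) (h32 : x₃ ≤ x₂) (h21 : x₂ ≤ x₁)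
    (hsum : x₂ + x₃ + x₄ ≤ x₁)
    (hgcd : ∀ d : ℤ, d ∣ x₁ → d ∣ x₂ → d ∣ x₃ → d ∣ x₄ → IsUnit d)
    (heq : x₁ ^ 2 = x₂ ^ 2 + x₃ ^ 2 + 7 * x₄ ^ 2) :
    x₁ = 3 ∧ x₂ = 1 ∧ x₃ = 1 ∧ x₄ = 1 :=
  diophantine_3111_general x₁ x₂ x₃ x₄ hp1 hp4 h43 h32 hsum hgcd heq
end

section
/- Let b be the standard bilinear form of signature (1, n-1) on ℤⁿ, b(x,y) = x₁y₁ - ∑_{i≥2} xᵢyᵢ, with n ≥ 4. For every ξ ∈ ℤⁿ with b(ξ,ξ) ≥ 0 there exists an isometry φ of (ℤⁿ, b) such that φ(ξ) = (x₁,…,xₙ) satisfies 0 ≤ xₙ ≤ xₙ₋₁ ≤ ⋯ ≤ x₁ and x₂ + x₃ + x₄ ≤ x₁. -/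
/-- The standard bilinear form of signature (1, n-1) on ℤⁿ:
b(x,y) = x₁y₁ - x₂y₂ - ⋯ - xₙyₙ. -/
def lorentzForm {n : ℕ} (x y : Fin n → ℤ) : ℤ :=
  ∑ i : Fin n, if i.val = 0 then x i * y i else -(x i * y i)

namespace OrbitNF

variable {n : ℕ}

/-- sign change isometry -/
def signEquiv (ε : Fin n → ℤ) (hε : ∀ i, ε i * ε i = 1) :
    (Fin n → ℤ) ≃ₗ[ℤ] (Fin n → ℤ) where
  toFun x := fun i => ε i * x i
  invFun x := fun i => ε i * x i
  left_inv x := funext fun i => by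
    show ε i * (ε i * x i) = x i
    rw [← mul_assoc, hε i, one_mul]
  right_inv x := funext fun i => by
    show ε i * (ε i * x i) = x i
    rw [← mul_assoc, hε i, one_mul]
  map_add' x y := funext fun i => by simp [mul_add]
  map_smul' c x := funext fun i => by simp; ring

lemma sign_iso (ε : Fin n → ℤ) (hε : ∀ i, ε i * ε i = 1) (x y : Fin n → ℤ) :
    lorentzForm (signEquiv ε hε x) (signEquiv ε hε y) = lorentzForm x y := by
  unfold lorentzForm signEquiv
  refine Finset.sum_congr rfl fun i _ => ?_
  have h : (ε i * x i) * (ε i * y i) = x i * y i := by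
    rw [show (ε i * x i) * (ε i * y i) = (ε i * ε i) * (x i * y i) from by ring, hε i, one_mul]
  simp only [LinearEquiv.coe_mk, Equiv.coe_fn_mk, LinearMap.coe_mk, AddHom.coe_mk]
  split <;> rw [h]

/-- permutation isometry -/
def permEquiv (π : Equiv.Perm (Fin n)) : (Fin n → ℤ) ≃ₗ[ℤ] (Fin n → ℤ) where
  toFun x := x ∘ π
  invFun x := x ∘ π.symm
  left_inv x := funext fun i => by simp
  right_inv x := funext fun i => by simp
  map_add' x y := rfl
  map_smul' c x := rfl

lemma perm_iso (π : Equiv.Perm (Fin n)) (h0 : ∀ i : Fin n, (π i).val = 0 ↔ i.val = 0)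
    (x y : Fin n → ℤ) :
    lorentzForm (permEquiv π x) (permEquiv π y) = lorentzForm x y := by
  unfold lorentzForm permEquiv
  simp only [LinearEquiv.coe_mk, Equiv.coe_fn_mk, LinearMap.coe_mk, AddHom.coe_mk]
  rw [← Equiv.sum_comp π (fun j => if j.val = 0 then x j * y j else -(x j * y j))]
  refine Finset.sum_congr rfl fun i _ => ?_
  simp only [Function.comp]
  by_cases h : i.val = 0
  · rw [if_pos h, if_pos ((h0 i).mpr h)]
  · rw [if_neg h, if_neg (fun hh => h ((h0 i).mp hh))]

section Refl

variable {m : ℕ}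

def cX (x : Fin (m + 4) → ℤ) : ℤ :=
  x ⟨0, by omega⟩ - x ⟨1, by omega⟩ - x ⟨2, by omega⟩ - x ⟨3, by omega⟩

def reflFun (x : Fin (m + 4) → ℤ) : Fin (m + 4) → ℤ :=
  fun i => if i.val < 4 then x i + cX x else x i

lemma reflFun_apply_of_lt (x : Fin (m + 4) → ℤ) (i : Fin (m + 4)) (h : i.val < 4) :
    reflFun x i = x i + cX x := if_pos h

lemma reflFun_apply_of_ge (x : Fin (m + 4) → ℤ) (i : Fin (m + 4)) (h : 4 ≤ i.val) :
    reflFun x i = x i := if_neg (by omega)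

lemma cX_reflFun (x : Fin (m + 4) → ℤ) : cX (reflFun x) = -cX x := by
  unfold cX
  rw [reflFun_apply_of_lt x _ (by norm_num), reflFun_apply_of_lt x _ (by norm_num),
    reflFun_apply_of_lt x _ (by norm_num), reflFun_apply_of_lt x _ (by norm_num)]
  unfold cX; ring

lemma reflFun_involutive (x : Fin (m + 4) → ℤ) : reflFun (reflFun x) = x := by
  funext i
  by_cases h : i.val < 4
  · rw [reflFun_apply_of_lt _ _ h, reflFun_apply_of_lt _ _ h, cX_reflFun]; ring
  · rw [reflFun_apply_of_ge _ _ (by omega), reflFun_apply_of_ge _ _ (by omega)]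

def reflEquiv : (Fin (m + 4) → ℤ) ≃ₗ[ℤ] (Fin (m + 4) → ℤ) where
  toFun := reflFun
  invFun := reflFun
  left_inv := reflFun_involutive
  right_inv := reflFun_involutive
  map_add' x y := by
    funext i
    unfold reflFun cX
    by_cases h : i.val < 4 <;> simp [h] <;> ring
  map_smul' c x := by
    funext i
    unfold reflFun cX
    by_cases h : i.val < 4 <;> simp [h] <;> ring

def tailSet (m : ℕ) : Finset (Fin (m + 4)) := Finset.univ.filter (fun i => 4 ≤ i.val)

lemma lorentz_decomp (x y : Fin (m + 4) → ℤ) :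
    lorentzForm x y = x ⟨0, by omega⟩ * y ⟨0, by omega⟩ - x ⟨1, by omega⟩ * y ⟨1, by omega⟩
      - x ⟨2, by omega⟩ * y ⟨2, by omega⟩ - x ⟨3, by omega⟩ * y ⟨3, by omega⟩
      - ∑ i ∈ tailSet m, x i * y i := by
  unfold lorentzForm
  rw [← Finset.sum_filter_add_sum_filter_not Finset.univ (fun i : Fin (m+4) => i.val < 4)]
  have h1 : Finset.univ.filter (fun i : Fin (m+4) => i.val < 4) =
      {⟨0, by omega⟩, ⟨1, by omega⟩, ⟨2, by omega⟩, ⟨3, by omega⟩} := by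
    ext i
    simp only [Finset.mem_filter, Finset.mem_univ, true_and, Finset.mem_insert,
      Finset.mem_singleton, Fin.ext_iff]
    omega
  have h2 : Finset.univ.filter (fun i : Fin (m+4) => ¬ i.val < 4) = tailSet m := by
    unfold tailSet; ext i; simp only [Finset.mem_filter, Finset.mem_univ, true_and, not_lt]
  rw [h1, h2]
  rw [show ({⟨0, by omega⟩, ⟨1, by omega⟩, ⟨2, by omega⟩, ⟨3, by omega⟩} :
      Finset (Fin (m+4))) = insert ⟨0, by omega⟩ (insert ⟨1, by omega⟩
      (insert ⟨2, by omega⟩ {⟨3, by omega⟩})) from rfl]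
  rw [Finset.sum_insert (by simp [Fin.ext_iff]), Finset.sum_insert (by simp [Fin.ext_iff]),
    Finset.sum_insert (by simp [Fin.ext_iff]), Finset.sum_singleton]
  have h3 : ∑ i ∈ tailSet m, (if i.val = 0 then x i * y i else -(x i * y i))
      = -∑ i ∈ tailSet m, x i * y i := by
    rw [← Finset.sum_neg_distrib]
    refine Finset.sum_congr rfl fun i hi => ?_
    have : 4 ≤ i.val := by unfold tailSet at hi; simpa using hi
    rw [if_neg (by omega)]
  rw [h3]
  rw [if_pos (show ((⟨0, by omega⟩ : Fin (m+4)).val = 0) from rfl),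
    if_neg (show ¬((⟨1, by omega⟩ : Fin (m+4)).val = 0) from by simp),
    if_neg (show ¬((⟨2, by omega⟩ : Fin (m+4)).val = 0) from by simp),
    if_neg (show ¬((⟨3, by omega⟩ : Fin (m+4)).val = 0) from by simp)]
  ring

lemma reflEquiv_apply (x : Fin (m + 4) → ℤ) : reflEquiv x = reflFun x := rfl

lemma refl_iso (x y : Fin (m + 4) → ℤ) :
    lorentzForm (reflEquiv x) (reflEquiv y) = lorentzForm x y := by
  rw [reflEquiv_apply, reflEquiv_apply, lorentz_decomp (reflFun x) (reflFun y),
    lorentz_decomp x y]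
  have ht : ∑ i ∈ tailSet m, reflFun x i * reflFun y i = ∑ i ∈ tailSet m, x i * y i := by
    refine Finset.sum_congr rfl fun i hi => ?_
    have h4 : 4 ≤ i.val := by unfold tailSet at hi; simpa using hi
    rw [reflFun_apply_of_ge x i h4, reflFun_apply_of_ge y i h4]
  rw [ht, reflFun_apply_of_lt x _ (by norm_num), reflFun_apply_of_lt x _ (by norm_num),
    reflFun_apply_of_lt x _ (by norm_num), reflFun_apply_of_lt x _ (by norm_num),
    reflFun_apply_of_lt y _ (by norm_num), reflFun_apply_of_lt y _ (by norm_num),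
    reflFun_apply_of_lt y _ (by norm_num), reflFun_apply_of_lt y _ (by norm_num)]
  unfold cX; ring

lemma lorentz_erase (x y : Fin (m + 4) → ℤ) :
    lorentzForm x y = x ⟨0, by omega⟩ * y ⟨0, by omega⟩
      - ∑ i ∈ Finset.univ.erase ⟨0, by omega⟩, x i * y i := by
  unfold lorentzForm
  rw [← Finset.add_sum_erase _ _ (Finset.mem_univ (⟨0, by omega⟩ : Fin (m + 4)))]
  rw [if_pos rfl]
  have h : ∑ i ∈ Finset.univ.erase (⟨0, by omega⟩ : Fin (m + 4)),
      (if i.val = 0 then x i * y i else -(x i * y i))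
      = -∑ i ∈ Finset.univ.erase (⟨0, by omega⟩ : Fin (m + 4)), x i * y i := by
    rw [← Finset.sum_neg_distrib]
    refine Finset.sum_congr rfl fun i hi => ?_
    have hi0 : i ≠ ⟨0, by omega⟩ := (Finset.mem_erase.mp hi).1
    rw [if_neg (fun h => hi0 (Fin.ext h))]
  rw [h]; ring

lemma coord_le (x : Fin (m + 4) → ℤ) (hx : ∀ i, 0 ≤ x i) (h : 0 ≤ lorentzForm x x)
    (i : Fin (m + 4)) : x i ≤ x ⟨0, by omega⟩ := by
  by_cases hi : i = ⟨0, by omega⟩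
  · rw [hi]
  · have h1 : x i * x i ≤ ∑ j ∈ Finset.univ.erase (⟨0, by omega⟩ : Fin (m + 4)), x j * x j :=
      Finset.single_le_sum (f := fun j => x j * x j) (fun j _ => mul_self_nonneg (x j))
        (Finset.mem_erase.mpr ⟨hi, Finset.mem_univ i⟩)
    rw [lorentz_erase x x] at h
    nlinarith [hx i, hx (⟨0, by omega⟩ : Fin (m + 4))]

lemma sum3_le (x : Fin (m + 4) → ℤ) (hx : ∀ i, 0 ≤ x i) (h : 0 ≤ lorentzForm x x) :
    x ⟨1, by omega⟩ + x ⟨2, by omega⟩ + x ⟨3, by omega⟩ ≤ 2 * x ⟨0, by omega⟩ := by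
  have hsub : ({⟨1, by omega⟩, ⟨2, by omega⟩, ⟨3, by omega⟩} : Finset (Fin (m + 4)))
      ⊆ Finset.univ.erase ⟨0, by omega⟩ := by
    intro j hj
    simp only [Finset.mem_insert, Finset.mem_singleton] at hj
    refine Finset.mem_erase.mpr ⟨?_, Finset.mem_univ j⟩
    rcases hj with h' | h' | h' <;> (subst h'; simp [Fin.ext_iff])
  have h1 : ∑ j ∈ ({⟨1, by omega⟩, ⟨2, by omega⟩, ⟨3, by omega⟩} : Finset (Fin (m + 4))),
      x j * x j ≤ ∑ j ∈ Finset.univ.erase (⟨0, by omega⟩ : Fin (m + 4)), x j * x j :=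
    Finset.sum_le_sum_of_subset_of_nonneg hsub (fun j _ _ => mul_self_nonneg (x j))
  rw [Finset.sum_insert (by simp [Fin.ext_iff]), Finset.sum_insert (by simp [Fin.ext_iff]),
    Finset.sum_singleton] at h1
  rw [lorentz_erase x x] at h
  nlinarith [hx (⟨0, by omega⟩ : Fin (m + 4)), hx (⟨1, by omega⟩ : Fin (m + 4)),
    hx (⟨2, by omega⟩ : Fin (m + 4)), hx (⟨3, by omega⟩ : Fin (m + 4)),
    sq_nonneg (x ⟨1, by omega⟩ - x ⟨2, by omega⟩), sq_nonneg (x ⟨1, by omega⟩ - x ⟨3, by omega⟩),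
    sq_nonneg (x ⟨2, by omega⟩ - x ⟨3, by omega⟩),
    sq_nonneg (x ⟨1, by omega⟩ + x ⟨2, by omega⟩ + x ⟨3, by omega⟩ - 2 * x ⟨0, by omega⟩),
    sq_nonneg (x ⟨1, by omega⟩ + x ⟨2, by omega⟩ + x ⟨3, by omega⟩ + 2 * x ⟨0, by omega⟩)]

lemma normalize (ξ : Fin (m + 4) → ℤ) :
    ∃ φ : (Fin (m + 4) → ℤ) ≃ₗ[ℤ] (Fin (m + 4) → ℤ),
      (∀ x y, lorentzForm (φ x) (φ y) = lorentzForm x y) ∧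
      (∀ i, 0 ≤ φ ξ i) ∧
      (∀ i j : Fin (m + 4), 0 < i.val → i ≤ j → φ ξ j ≤ φ ξ i) ∧
      φ ξ ⟨0, by omega⟩ = |ξ ⟨0, by omega⟩| := by
  set ε : Fin (m + 4) → ℤ := fun i => if ξ i < 0 then -1 else 1 with hεdef
  have hε : ∀ i, ε i * ε i = 1 := by
    intro i; rw [hεdef]; dsimp only; split <;> norm_num
  have hw : ∀ i, ε i * ξ i = |ξ i| := by
    intro i; rw [hεdef]; dsimp only
    split
    · rw [abs_of_neg ‹_›]; ring
    · rw [abs_of_nonneg (not_lt.mp ‹_›)]; ring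
  set g : Fin (m + 3) → ℤ := fun j => -|ξ j.succ| with hgdef
  set e : Equiv.Perm (Fin (m + 3)) := Tuple.sort g with hedef
  set π : Equiv.Perm (Fin (m + 4)) := Equiv.Perm.decomposeFin.symm (0, e) with hπdef
  have hπ0 : π 0 = 0 := Equiv.Perm.decomposeFin_symm_apply_zero 0 e
  have hπsucc : ∀ j : Fin (m + 3), π j.succ = (e j).succ := by
    intro j
    rw [hπdef, Equiv.Perm.decomposeFin_symm_apply_succ]
    simp
  have h0iff : ∀ i : Fin (m + 4), (π i).val = 0 ↔ i.val = 0 := by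
    intro i
    constructor
    · intro h
      have h1 : π i = 0 := Fin.ext h
      have h2 : i = 0 := π.injective (h1.trans hπ0.symm)
      rw [h2]; rfl
    · intro h
      have h2 : i = 0 := Fin.ext h
      rw [h2, hπ0]; rfl
  refine ⟨(signEquiv ε hε).trans (permEquiv π), ?_, ?_, ?_, ?_⟩
  case _ =>
    intro x y
    rw [LinearEquiv.trans_apply, LinearEquiv.trans_apply, perm_iso π h0iff, sign_iso]
  all_goals
    have happ : ∀ i, ((signEquiv ε hε).trans (permEquiv π)) ξ i = |ξ (π i)| := by
      intro i
      rw [LinearEquiv.trans_apply]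
      show ε (π i) * ξ (π i) = _
      exact hw (π i)
  case _ =>
    intro i; rw [happ]; exact abs_nonneg _
  case _ =>
    intro i j hi hij
    have hi' : i.val - 1 < m + 3 := by omega
    have hj' : j.val - 1 < m + 3 := by have := j.isLt; omega
    set i' : Fin (m + 3) := ⟨i.val - 1, hi'⟩
    set j' : Fin (m + 3) := ⟨j.val - 1, hj'⟩
    have hii : i'.succ = i := Fin.ext (by show i.val - 1 + 1 = i.val; omega)
    have hjj : j'.succ = j := Fin.ext (by show j.val - 1 + 1 = j.val; omega)
    have e1 : ((signEquiv ε hε).trans (permEquiv π)) ξ i = -((g ∘ e) i') := by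
      rw [← hii, happ, hπsucc, hgdef]; simp
    have e2 : ((signEquiv ε hε).trans (permEquiv π)) ξ j = -((g ∘ e) j') := by
      rw [← hjj, happ, hπsucc, hgdef]; simp
    have hmono := Tuple.monotone_sort g (show i' ≤ j' from by
      rw [Fin.le_def]; show i.val - 1 ≤ j.val - 1; omega)
    rw [e1, e2, ← hedef] at *
    omega
  case _ =>
    have h00 : (⟨0, by omega⟩ : Fin (m + 4)) = 0 := rfl
    rw [happ, h00, hπ0]

set_option maxHeartbeats 1000000 in
lemma main_aux (m N : ℕ) : ∀ ξ : Fin (m + 4) → ℤ, 0 ≤ lorentzForm ξ ξ →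
    (ξ ⟨0, by omega⟩).natAbs ≤ N →
    ∃ φ : (Fin (m + 4) → ℤ) ≃ₗ[ℤ] (Fin (m + 4) → ℤ),
      (∀ x y, lorentzForm (φ x) (φ y) = lorentzForm x y) ∧
      (∀ i, 0 ≤ φ ξ i) ∧
      (∀ i j : Fin (m + 4), i ≤ j → φ ξ j ≤ φ ξ i) ∧
      φ ξ ⟨1, by omega⟩ + φ ξ ⟨2, by omega⟩ + φ ξ ⟨3, by omega⟩ ≤ φ ξ ⟨0, by omega⟩ := by
  induction N using Nat.strong_induction_on with
  | _ N ih =>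
  intro ξ hξ hb
  obtain ⟨φ₀, hiso0, hpos, hsort, h0⟩ := normalize ξ
  have hηform : 0 ≤ lorentzForm (φ₀ ξ) (φ₀ ξ) := by rw [hiso0]; exact hξ
  by_cases hc : φ₀ ξ ⟨1, by omega⟩ + φ₀ ξ ⟨2, by omega⟩ + φ₀ ξ ⟨3, by omega⟩
      ≤ φ₀ ξ ⟨0, by omega⟩
  · refine ⟨φ₀, hiso0, hpos, ?_, hc⟩
    intro i j hij
    by_cases hi : 0 < i.val
    · exact hsort i j hi hij
    · have hi0 : i = ⟨0, by omega⟩ := Fin.ext (show i.val = 0 by omega)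
      rw [hi0]
      exact coord_le (φ₀ ξ) hpos hηform j
  · set η := φ₀ ξ with hηdef
    have hθ0 : reflEquiv η ⟨0, by omega⟩ = η ⟨0, by omega⟩ + cX η := by
      rw [reflEquiv_apply]
      exact reflFun_apply_of_lt η ⟨0, by omega⟩ (by norm_num)
    have h2 : η ⟨1, by omega⟩ + η ⟨2, by omega⟩ + η ⟨3, by omega⟩ ≤ 2 * η ⟨0, by omega⟩ :=
      sum3_le η hpos hηform
    have hθ0nn : 0 ≤ reflEquiv η ⟨0, by omega⟩ := by rw [hθ0]; unfold cX; linarith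
    have hθlt : reflEquiv η ⟨0, by omega⟩ < η ⟨0, by omega⟩ := by
      rw [hθ0]; unfold cX; linarith [not_le.mp hc]
    have hθform : 0 ≤ lorentzForm (reflEquiv η) (reflEquiv η) := by
      rw [refl_iso η η]; exact hηform
    have hbη : (η ⟨0, by omega⟩).natAbs ≤ N := by rw [h0, Int.natAbs_abs]; exact hb
    have hNlt : (reflEquiv η ⟨0, by omega⟩).natAbs < N := by
      have h0n : 0 ≤ η ⟨0, by omega⟩ := hpos _
      omega
    obtain ⟨ψ, hisoψ, hψpos, hψsort, hψc⟩ :=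
      ih _ hNlt (reflEquiv η) hθform le_rfl
    have happ : ∀ x : Fin (m + 4) → ℤ,
        (φ₀.trans (reflEquiv.trans ψ)) x = ψ (reflEquiv (φ₀ x)) := fun x => rfl
    refine ⟨φ₀.trans (reflEquiv.trans ψ), ?_, ?_, ?_, ?_⟩
    · intro x y; rw [happ, happ, hisoψ, refl_iso (φ₀ x) (φ₀ y), hiso0]
    · intro i; rw [happ]; exact hψpos i
    · intro i j hij; rw [happ]; exact hψsort i j hij
    · rw [happ]; exact hψc

end Refl

end OrbitNF

/-- any vector of non-negative norm can be moved by an isometry of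
(ℤⁿ, b) to a vector with 0 ≤ xₙ ≤ ⋯ ≤ x₁ and x₂ + x₃ + x₄ ≤ x₁. -/
theorem orbit_normal_form
    (n : ℕ) (hn : 4 ≤ n) (ξ : Fin n → ℤ)
    (hξ : 0 ≤ lorentzForm ξ ξ) :
    ∃ φ : (Fin n → ℤ) ≃ₗ[ℤ] (Fin n → ℤ),
      (∀ x y : Fin n → ℤ, lorentzForm (φ x) (φ y) = lorentzForm x y) ∧
      (∀ i : Fin n, 0 ≤ φ ξ i) ∧
      (∀ i j : Fin n, i ≤ j → φ ξ j ≤ φ ξ i) ∧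
      φ ξ ⟨1, by omega⟩ + φ ξ ⟨2, by omega⟩ + φ ξ ⟨3, by omega⟩ ≤
        φ ξ ⟨0, by omega⟩ := by
  obtain ⟨m, rfl⟩ : ∃ m, n = m + 4 := ⟨n - 4, by omega⟩
  exact OrbitNF.main_aux m (ξ ⟨0, by omega⟩).natAbs ξ hξ le_rfl
end

section
/- Let (Λ, b) be a unimodular lattice and suppose ω₁ and ω₂ are both characteristic elements of Λ. Then b(ω₁,ω₁) ≡ b(ω₂,ω₂) (mod 8). -/
/-!
If `ω₁, ω₂` are characteristic then `b (ω₁ - ω₂) λ` is even for every `λ`; since the Gram matrix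
is invertible over `ℤ`, this forces `ω₁ - ω₂ = 2μ`. Expanding,
`b ω₁ ω₁ = b ω₂ ω₂ + 4 (b ω₂ μ + b μ μ)`, and `b ω₂ μ + b μ μ` is even because `ω₂` is
characteristic.
-/

open Matrix

theorem Matrix.dvd_of_forall_dvd_vecMul {R ι : Type*} [CommRing R] [Fintype ι] [DecidableEq ι]
    {G : Matrix ι ι R} (hG : IsUnit G.det) {a : R} {x : ι → R}
    (h : ∀ j, a ∣ (x ᵥ* G) j) (i : ι) : a ∣ x i := by
  have hx : x = (x ᵥ* G) ᵥ* G⁻¹ := by rw [vecMul_vecMul, mul_nonsing_inv G hG, vecMul_one]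
  rw [hx]
  exact Finset.dvd_sum fun j _ => (h j).mul_right _

theorem Module.Basis.exists_eq_smul_of_forall_dvd_repr {R M ι : Type*} [CommRing R]
    [AddCommGroup M] [Module R M] [Fintype ι] (e : Basis ι R M) {a : R} {v : M}
    (h : ∀ i, a ∣ e.repr v i) : ∃ μ, v = a • μ := by
  choose c hc using h
  refine ⟨e.equivFun.symm c, e.equivFun.injective ?_⟩
  rw [map_smul, LinearEquiv.apply_symm_apply]
  ext i
  simp [hc]

theorem LinearMap.apply_basis_eq_vecMul {R M ι : Type*} [CommRing R] [AddCommGroup M]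
    [Module R M] [Fintype ι] (e : Module.Basis ι R M) (b : M →ₗ[R] M →ₗ[R] R) (v : M) (j : ι) :
    b v (e j) = (e.repr v ᵥ* Matrix.of fun i j => b (e i) (e j)) j := by
  conv_lhs => rw [← e.sum_repr v]
  simp only [map_sum, sum_apply, map_smul, smul_apply, smul_eq_mul, vecMul, dotProduct, of_apply]

theorem LinearMap.exists_eq_smul_of_forall_dvd {R M ι : Type*} [CommRing R] [AddCommGroup M]
    [Module R M] [Fintype ι] [DecidableEq ι] (e : Module.Basis ι R M) (b : M →ₗ[R] M →ₗ[R] R)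
    (hb : IsUnit (Matrix.of fun i j => b (e i) (e j)).det) {a : R} {v : M}
    (h : ∀ lam, a ∣ b v lam) : ∃ μ, v = a • μ :=
  e.exists_eq_smul_of_forall_dvd_repr <|
    dvd_of_forall_dvd_vecMul hb fun j => apply_basis_eq_vecMul e b v j ▸ h (e j)

namespace LinearMap

variable {M : Type*} [AddCommGroup M] [Module ℤ M]

def IsCharacteristic (b : M →ₗ[ℤ] M →ₗ[ℤ] ℤ) (ω : M) : Prop :=
  ∀ lam : M, b ω lam ≡ b lam lam [ZMOD 2]

theorem IsCharacteristic.two_dvd_sub {b : M →ₗ[ℤ] M →ₗ[ℤ] ℤ} {ω₁ ω₂ : M}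
    (h₁ : b.IsCharacteristic ω₁) (h₂ : b.IsCharacteristic ω₂) (lam : M) :
    2 ∣ b (ω₁ - ω₂) lam := by
  rw [map_sub, sub_apply]
  exact Int.ModEq.dvd ((h₁ lam).trans (h₂ lam).symm).symm

theorem IsCharacteristic.apply_add_add_self_modEq {b : M →ₗ[ℤ] M →ₗ[ℤ] ℤ}
    (hsymm : ∀ x y, b x y = b y x) {ω : M} (hω : b.IsCharacteristic ω) (μ : M) :
    b (ω + (μ + μ)) (ω + (μ + μ)) ≡ b ω ω [ZMOD 8] := by
  have hexpand : b (ω + (μ + μ)) (ω + (μ + μ)) = b ω ω + 4 * (b ω μ + b μ μ) := by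
    simp only [map_add, add_apply, hsymm μ ω]
    ring
  obtain ⟨k, hk⟩ := Int.ModEq.dvd (hω μ)
  rw [hexpand, Int.modEq_iff_dvd]
  exact ⟨k - b μ μ, by linear_combination 4 * hk⟩

end LinearMap

/-- any two characteristic elements of a unimodular lattice have
norms congruent modulo 8. -/
theorem characteristic_norm_mod_eight
    (Λ : Type*) [AddCommGroup Λ] [Module ℤ Λ]
    (ι : Type*) [Fintype ι] [DecidableEq ι]
    (e : Module.Basis ι ℤ Λ)
    (b : Λ →ₗ[ℤ] Λ →ₗ[ℤ] ℤ) (hsymm : ∀ x y : Λ, b x y = b y x)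
    (hdet : (Matrix.of fun i j : ι => b (e i) (e j)).det = 1 ∨
            (Matrix.of fun i j : ι => b (e i) (e j)).det = -1)
    (ω₁ ω₂ : Λ)
    (h1 : ∀ lam : Λ, Int.ModEq 2 (b ω₁ lam) (b lam lam))
    (h2 : ∀ lam : Λ, Int.ModEq 2 (b ω₂ lam) (b lam lam)) :
    Int.ModEq 8 (b ω₁ ω₁) (b ω₂ ω₂) := by
  obtain ⟨μ, hμ⟩ := b.exists_eq_smul_of_forall_dvd e (Int.isUnit_iff.mpr hdet)
    (LinearMap.IsCharacteristic.two_dvd_sub h1 h2)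
  have hω : ω₁ = ω₂ + (μ + μ) := by rw [← two_smul ℤ μ, ← hμ, add_sub_cancel]
  rw [hω]
  exact LinearMap.IsCharacteristic.apply_add_add_self_modEq hsymm h2 μ
end

section
/- Let U = ℤ² with bilinear form b(x,y) = x₁y₂ + x₂y₁ (the hyperbolic plane). If ω ∈ U is twice a primitive vector and b(ω,ω) = 8, then there exists a basis (f₁, f₂) of U with b(f₁,f₁) = b(f₂,f₂) = 0, b(f₁,f₂) = 1 and ω = -2f₁ - 2f₂; in particular b(ω, fᵢ) = -b(fᵢ,fᵢ) - 2 for i = 1,2. -/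
/-- The hyperbolic plane form on ℤ²: b(x,y) = x₁y₂ + x₂y₁. -/
def hypForm (x y : Fin 2 → ℤ) : ℤ := x 0 * y 1 + x 1 * y 0

/-! Writing `ω = 2v`, the norm condition becomes `b(v, v) = 2 v₀ v₁ = 2`, so `v = ±(1, 1)`. The basis
is then `∓` the standard basis, which is hyperbolic because `(±1)² = 1`. -/

theorem hypForm_comm (x y : Fin 2 → ℤ) : hypForm x y = hypForm y x := by
  simp only [hypForm]; ring

@[simp]
theorem hypForm_neg_left (x y : Fin 2 → ℤ) : hypForm (-x) y = -hypForm x y := by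
  simp only [hypForm, Pi.neg_apply]; ring

@[simp]
theorem hypForm_sub_left (x y z : Fin 2 → ℤ) : hypForm (x - y) z = hypForm x z - hypForm y z := by
  simp only [hypForm, Pi.sub_apply]; ring

@[simp]
theorem hypForm_nsmul_left (n : ℕ) (x y : Fin 2 → ℤ) : hypForm (n • x) y = n * hypForm x y := by
  simp only [hypForm, Pi.smul_apply, nsmul_eq_mul]; ring

@[simp]
theorem hypForm_nsmul_right (n : ℕ) (x y : Fin 2 → ℤ) : hypForm x (n • y) = n * hypForm x y := by
  rw [hypForm_comm, hypForm_nsmul_left, hypForm_comm]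

theorem hypForm_self (x : Fin 2 → ℤ) : hypForm x x = 2 * (x 0 * x 1) := by
  simp only [hypForm]; ring

theorem hypForm_neg_two_nsmul_sub_left {f : Fin 2 → Fin 2 → ℤ} (h00 : hypForm (f 0) (f 0) = 0)
    (h11 : hypForm (f 1) (f 1) = 0) (h01 : hypForm (f 0) (f 1) = 1) (i : Fin 2) :
    hypForm (-(2 • f 0) - 2 • f 1) (f i) = -hypForm (f i) (f i) - 2 := by
  have h10 : hypForm (f 1) (f 0) = 1 := hypForm_comm (f 0) (f 1) ▸ h01
  fin_cases i <;>
    simp only [Fin.zero_eta, Fin.mk_one, hypForm_sub_left, hypForm_neg_left, hypForm_nsmul_left,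
      h00, h11, h01, h10] <;> norm_num

noncomputable def hypBasis {c : ℤ} (hc : IsUnit c) : Module.Basis (Fin 2) ℤ (Fin 2 → ℤ) :=
  (Pi.basisFun ℤ (Fin 2)).isUnitSMul fun _ ↦ hc

theorem hypBasis_apply {c : ℤ} (hc : IsUnit c) (i : Fin 2) :
    hypBasis hc i = c • Pi.single i 1 := by
  simp [hypBasis, Module.Basis.isUnitSMul_apply]

theorem hypForm_hypBasis {c : ℤ} (hc : IsUnit c) (i j : Fin 2) :
    hypForm (hypBasis hc i) (hypBasis hc j) = if i = j then 0 else 1 := by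
  have := Int.isUnit_mul_self hc
  fin_cases i <;> fin_cases j <;> simp [hypForm, hypBasis_apply, this]

theorem neg_two_nsmul_hypBasis_sub {c : ℤ} (hc : IsUnit c) :
    -(2 • hypBasis hc 0) - 2 • hypBasis hc 1 = fun _ ↦ -2 * c := by
  funext j
  fin_cases j <;> simp [hypBasis_apply]

theorem apply_zero_mul_apply_one_of_hypForm_self_eq_two {v : Fin 2 → ℤ}
    (hv : hypForm v v = 2) : v 0 * v 1 = 1 := by
  rw [hypForm_self] at hv
  omega

theorem isUnit_apply_zero_of_hypForm_self_eq_two {v : Fin 2 → ℤ} (hv : hypForm v v = 2) :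
    IsUnit (v 0) :=
  .of_mul_eq_one _ (apply_zero_mul_apply_one_of_hypForm_self_eq_two hv)

theorem eq_const_of_hypForm_self_eq_two {v : Fin 2 → ℤ} (hv : hypForm v v = 2) :
    v = fun _ ↦ v 0 := by
  funext j
  fin_cases j
  · rfl
  · exact (Int.eq_of_mul_eq_one (apply_zero_mul_apply_one_of_hypForm_self_eq_two hv)).symm

/-- if ω ∈ U is twice a primitive vector of norm 8, then there is
a hyperbolic basis (f₁,f₂) with ω = -2f₁ - 2f₂; in particular
b(ω,fᵢ) = -b(fᵢ,fᵢ) - 2. -/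
theorem hyperbolic_plane_special_characteristic
    (ω : Fin 2 → ℤ)
    (htwice : ∃ v : Fin 2 → ℤ, ω = 2 • v ∧
      ∀ (m : ℤ) (w : Fin 2 → ℤ), v = m • w → IsUnit m)
    (hnorm : hypForm ω ω = 8) :
    ∃ f : Module.Basis (Fin 2) ℤ (Fin 2 → ℤ),
      hypForm (f 0) (f 0) = 0 ∧ hypForm (f 1) (f 1) = 0 ∧
      hypForm (f 0) (f 1) = 1 ∧
      ω = -(2 • f 0) - 2 • f 1 ∧
      ∀ i : Fin 2, hypForm ω (f i) = -(hypForm (f i) (f i)) - 2 := by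
  obtain ⟨v, rfl, -⟩ := htwice
  have hv : hypForm v v = 2 := by
    simp only [hypForm_nsmul_left, hypForm_nsmul_right, Nat.cast_ofNat] at hnorm
    omega
  have hunit := isUnit_apply_zero_of_hypForm_self_eq_two hv
  have h00 := hypForm_hypBasis hunit.neg 0 0
  have h11 := hypForm_hypBasis hunit.neg 1 1
  have h01 := hypForm_hypBasis hunit.neg 0 1
  have hω : (2 • v : Fin 2 → ℤ) = -(2 • hypBasis hunit.neg 0) - 2 • hypBasis hunit.neg 1 := by
    rw [neg_two_nsmul_hypBasis_sub, eq_const_of_hypForm_self_eq_two hv]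
    funext j
    simp
  refine ⟨hypBasis hunit.neg, h00, h11, h01, hω, fun i ↦ ?_⟩
  rw [hω]
  exact hypForm_neg_two_nsmul_sub_left h00 h11 h01 i
end

section
/- Let P(a) = (H/n!)·aⁿ + lower order terms be a degree-n polynomial with rational coefficients satisfying P(0) = 1, and suppose there exist integers a₀ < a₁ < ⋯ < aₙ such that P(aᵢ - aⱼ) = 0 for all i < j. Then the set {aᵢ - aⱼ : i < j} has exactly n elements, and there exists a nonzero integer k such that aᵢ = a₀ + k·i for all i; moreover P vanishes exactly at -k, -2k, …, -nk (for k > 0 after possibly replacing k with -k and the aᵢ by their negatives). -/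
/-!
The n differences a₀ - aₜ (1 ≤ t ≤ n) are distinct roots of P, and P has degree n, so they are
all of its roots; hence every difference aⱼ - aᵢ (i < j) is some aₜ - a₀. Writing
a_{j+1} - a₁ = aₜ - a₀ and using a_{j+1} - a_j ≥ a₁ - a₀ squeezes aⱼ ≤ aₜ < a_{j+1}, so t = j
and every consecutive gap equals a₁ - a₀.
-/

open Polynomial Function

theorem Polynomial.isRoot_iff_mem_range {R : Type*} [CommRing R] [IsDomain R] {P : R[X]}
    (hP : P ≠ 0) {n : ℕ} (hdeg : P.natDegree ≤ n) {f : Fin n → R} (hf : Injective f)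
    (hroot : ∀ i, P.IsRoot (f i)) (x : R) : P.IsRoot x ↔ x ∈ Set.range f := by
  refine ⟨fun hx => ?_, by rintro ⟨i, rfl⟩; exact hroot i⟩
  by_contra hxf
  refine hP (P.eq_zero_of_natDegree_lt_card_of_eval_eq_zero (f := Fin.cons x f)
    (Fin.cons_injective_iff.mpr ⟨hxf, hf⟩) (Fin.cases hx hroot) ?_)
  simpa using Nat.lt_succ_of_le hdeg

theorem Fin.exists_val_add_one_iff {n : ℕ} {p : ℕ → Prop} :
    (∃ i : Fin n, p (i + 1)) ↔ ∃ l, 1 ≤ l ∧ l ≤ n ∧ p l := by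
  refine ⟨fun ⟨i, hi⟩ => ⟨i + 1, by omega, i.isLt, hi⟩, fun ⟨l, hl1, hln, hl⟩ => ?_⟩
  exact ⟨⟨l - 1, by omega⟩, by rwa [Nat.sub_add_cancel hl1]⟩

theorem ncard_setOf_sub_eq {α : Type*} [AddGroup α] {n : ℕ} {a : Fin (n + 1) → α}
    (ha : Injective a) (hdiff : ∀ i j, i < j → ∃ s : Fin n, a 0 - a s.succ = a i - a j) :
    {d | ∃ i j, i < j ∧ d = a i - a j}.ncard = n := by
  have hset : {d | ∃ i j, i < j ∧ d = a i - a j} = Set.range fun s : Fin n => a 0 - a s.succ := by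
    ext d
    constructor
    · rintro ⟨i, j, hij, rfl⟩
      exact hdiff i j hij
    · rintro ⟨s, rfl⟩
      exact ⟨0, s.succ, s.succ_pos, rfl⟩
  rw [hset, Set.ncard_range_of_injective, Nat.card_fin]
  exact fun s t hst => Fin.succ_injective _ (ha (sub_right_injective hst))

section

variable {α : Type*} [AddCommGroup α] [LinearOrder α] [IsOrderedAddMonoid α] {n : ℕ}
  {a : Fin (n + 2) → α}

theorem succ_sub_castSucc_eq_of_forall_sub_eq (ha : StrictMono a)
    (hdiff : ∀ i j, i < j → ∃ t, a j - a i = a t - a 0) (j : Fin (n + 1)) :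
    a j.succ - a j.castSucc = a 1 - a 0 := by
  cases j using Fin.cases with
  | zero => rfl
  | succ j =>
  obtain ⟨s, hs⟩ := hdiff j.succ.castSucc j.succ.succ Fin.castSucc_lt_succ
  obtain ⟨t, ht⟩ := hdiff 1 j.succ.succ (Fin.one_lt_succ_succ j)
  rw [sub_eq_sub_iff_add_eq_add] at hs ht ⊢
  have hs1 : a 1 ≤ a s := by
    refine ha.monotone (Fin.one_le_of_ne_zero fun hs0 => ?_)
    rw [hs0, add_comm, add_left_cancel_iff] at hs
    exact (ha Fin.castSucc_lt_succ).ne' hs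
  have hle : j.succ.castSucc ≤ t := by
    rw [← ha.le_iff_le, ← add_le_add_iff_right (a 1), ← ht, hs, add_comm]
    exact add_le_add_left hs1 _
  have hlt : t < j.succ.succ := by
    rw [← ha.lt_iff_lt, ← add_lt_add_iff_right (a 1), ← ht]
    exact add_lt_add_right (ha Fin.zero_lt_one) _
  obtain rfl : t = j.succ.castSucc := le_antisymm (Fin.le_castSucc_iff.mpr hlt) hle
  rw [ht, add_comm]

theorem eq_add_nsmul_of_forall_sub_eq (ha : StrictMono a)
    (hdiff : ∀ i j, i < j → ∃ t, a j - a i = a t - a 0) (i : Fin (n + 2)) :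
    a i = a 0 + (i : ℕ) • (a 1 - a 0) := by
  induction i using Fin.induction with
  | zero => simp
  | succ i ih =>
    rw [← sub_add_cancel (a i.succ) (a i.castSucc),
      succ_sub_castSucc_eq_of_forall_sub_eq ha hdiff, ih, Fin.val_succ, Fin.val_castSucc,
      succ_nsmul]
    abel

end

theorem arithmetic_progression_of_roots_general
    (n : ℕ) (hn : 0 < n) (P : Polynomial ℚ) (hdeg : P.degree = n)
    (a : Fin (n + 1) → ℤ) (hmono : StrictMono a)
    (hroots : ∀ i j : Fin (n + 1), i < j →
      P.eval ((a i : ℚ) - (a j : ℚ)) = 0) :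
    ({d : ℤ | ∃ i j : Fin (n + 1), i < j ∧ d = a i - a j}.ncard = n) ∧
    ∃ k : ℤ, k ≠ 0 ∧ (∀ i : Fin (n + 1), a i = a 0 + k * (i : ℕ)) ∧
      ∀ x : ℚ, P.eval x = 0 ↔ ∃ l : ℕ, 1 ≤ l ∧ l ≤ n ∧ x = -((l : ℚ) * (k : ℚ)) := by
  have hP : P ≠ 0 := by rintro rfl; simp at hdeg
  obtain ⟨n, rfl⟩ : ∃ m, n = m + 1 := ⟨n - 1, by omega⟩
  set g : Fin (n + 1) → ℤ := fun i => a 0 - a i.succ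
  have hg : Injective g := fun i j hij =>
    Fin.succ_injective _ (hmono.injective (by simpa [g] using hij))
  have hroot_iff := isRoot_iff_mem_range hP (natDegree_eq_of_degree_eq_some hdeg).le
    ((Int.cast_injective (α := ℚ)).comp hg)
    (fun i => by simpa [g] using hroots 0 i.succ i.succ_pos)
  have hdiff : ∀ i j, i < j → ∃ s, g s = a i - a j := by
    intro i j hij
    obtain ⟨s, hs⟩ := (hroot_iff _).mp (hroots i j hij)
    exact ⟨s, Int.cast_injective (α := ℚ) (by push_cast; exact hs)⟩
  have hAP := eq_add_nsmul_of_forall_sub_eq hmono fun i j hij => by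
    obtain ⟨s, hs⟩ := hdiff i j hij
    exact ⟨s.succ, by simp only [g] at hs; linarith⟩
  set k := a 1 - a 0
  have hk : 0 < k := sub_pos.mpr (hmono Fin.zero_lt_one)
  have hgk : ∀ i, g i = -(((i : ℕ) + 1 : ℕ) * k) := fun i => by
    simp only [g, hAP i.succ, Fin.val_succ, nsmul_eq_mul]; ring
  refine ⟨ncard_setOf_sub_eq hmono.injective hdiff, k, hk.ne',
    fun i => by rw [hAP i, nsmul_eq_mul, mul_comm], fun x => ?_⟩
  rw [← IsRoot.def, hroot_iff, ← Fin.exists_val_add_one_iff]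
  simp [hgk, eq_comm]

/-- if a degree-n rational polynomial P with P(0) = 1 vanishes at
all differences aᵢ - aⱼ (i < j) of integers a₀ < a₁ < ⋯ < aₙ, then those
differences form a set of exactly n elements, the aᵢ form an arithmetic
progression aᵢ = a₀ + k·i with k ≠ 0, and P vanishes exactly at
-k, -2k, …, -nk. -/
theorem arithmetic_progression_of_roots
    (n : ℕ) (hn : 0 < n) (P : Polynomial ℚ) (hdeg : P.degree = n)
    (h0 : P.eval 0 = 1)
    (a : Fin (n + 1) → ℤ) (hmono : StrictMono a)
    (hroots : ∀ i j : Fin (n + 1), i < j →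
      P.eval ((a i : ℚ) - (a j : ℚ)) = 0) :
    ({d : ℤ | ∃ i j : Fin (n + 1), i < j ∧ d = a i - a j}.ncard = n) ∧
    ∃ k : ℤ, k ≠ 0 ∧ (∀ i : Fin (n + 1), a i = a 0 + k * (i : ℕ)) ∧
      ∀ x : ℚ, P.eval x = 0 ↔ ∃ l : ℕ, 1 ≤ l ∧ l ≤ n ∧ x = -((l : ℚ) * (k : ℚ)) :=
  arithmetic_progression_of_roots_general n hn P hdeg a hmono hroots
end
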